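/- Suppose there exist simple 4-(17,6,18), 4-(17,7,38), 4-(17,8,15) and 4-(17,9,27) designs, and simple 4-(18,5,4), 4-(18,7,84), 4-(18,8,133) and 4-(18,9,42) designs. Then there exists a simple 4-(35, 9, 23247) design (note 23247 = 369 × 63). -/

import Mathlib

/-!
Split the 35 points into a 17-set `X` and an 18-set `Y` and take as blocks all `a ∪ c`, where
for each `i ≤ 9` the part `a ⊆ X` runs over an `i`-uniform family `Aᵢ` and `c ⊆ Y` over a
`(9 - i)`-uniform family `Cᵢ`. If every `s`-subset of `X` (of `Y`), `s ≤ 4`, lies in `λᵢ(s)`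
members of `Aᵢ` (`μᵢ(s)` members of `Cᵢ`), then a 4-set meeting `X` in `j` points lies in
`∑ᵢ λᵢ(j) μᵢ(4 - j)` blocks. The families are the given designs, complete families `(X choose i)`
and empty ones; the indices `λᵢ(s)` of a 4-design follow by double counting, and for the choice
below the sum equals 23247 for each `j = 0, …, 4`.
-/

/-- `SimpleDesignExists t v k lam` asserts the existence of a simple
`t-(v, k, lam)` design: a `v`-set `X` together with a set `B` of distinct
`k`-element subsets of `X` (blocks) such that every `t`-element subset of `X`
is contained in exactly `lam` blocks. -/
def SimpleDesignExists (t v k lam : ℕ) : Prop :=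
  ∃ (X : Finset ℕ) (B : Finset (Finset ℕ)),
    X.card = v ∧
    (∀ b ∈ B, b ⊆ X ∧ b.card = k) ∧
    (∀ T ⊆ X, T.card = t → (B.filter (fun b => T ⊆ b)).card = lam)

open Finset
open scoped FinsetFamily

variable {α β : Type*} [DecidableEq α]

/-- `B` is a simple `t-(#X, k, lam)` design on `X`. -/
def IsDesign (X : Finset α) (B : Finset (Finset α)) (k t lam : ℕ) : Prop :=
  B ⊆ X.powersetCard k ∧ ∀ T ⊆ X, #T = t → #{b ∈ B | T ⊆ b} = lam

/-- The number of blocks through an `s`-set in a `t-(v, k, lam)` design, `s ≤ t ≤ k`. -/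
def designIndex (v k t lam s : ℕ) : ℕ :=
  lam * (v - s).choose (t - s) / (k - s).choose (t - s)

/-- The number of `k`-subsets of a `v`-set containing a given `s`-set: their complements are the
`(v - k)`-subsets of the remaining `v - s` points. Unlike `(v - s).choose (k - s)`, this is
also right (zero) when `s > k`. -/
def completeIndex (v k s : ℕ) : ℕ :=
  (v - s).choose (v - k)

lemma isDesign_powersetCard (X : Finset α) {k : ℕ} (hk : k ≤ #X) (s : ℕ) :
    IsDesign X (X.powersetCard k) k s (completeIndex #X k s) := by
  refine ⟨Subset.rfl, fun S hS hSs => ?_⟩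
  subst hSs
  have hSX := card_le_card hS
  rw [completeIndex]
  by_cases hSk : #S ≤ k
  · rw [card_filter_powersetCard_subset S X k hS hSk]
    exact Nat.choose_symm_of_eq_add (by omega)
  · rw [Nat.choose_eq_zero_of_lt (by omega), card_eq_zero, filter_eq_empty_iff]
    intro b hb hSb
    exact hSk ((card_le_card hSb).trans (mem_powersetCard.1 hb).2.le)

lemma isDesign_empty (X : Finset α) (k s : ℕ) : IsDesign X ∅ k s 0 :=
  ⟨empty_subset _, fun _ _ _ => by simp⟩

namespace IsDesign

variable {X : Finset α} {B : Finset (Finset α)} {k t lam : ℕ}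

lemma subset_of_mem (hB : IsDesign X B k t lam) {b : Finset α} (hb : b ∈ B) : b ⊆ X :=
  (mem_powersetCard.1 (hB.1 hb)).1

lemma card_of_mem (hB : IsDesign X B k t lam) {b : Finset α} (hb : b ∈ B) : #b = k :=
  (mem_powersetCard.1 (hB.1 hb)).2

lemma card_filter_superset_mul (hB : IsDesign X B k t lam) {S : Finset α} (hS : S ⊆ X)
    (hSt : #S ≤ t) :
    #{b ∈ B | S ⊆ b} * (k - #S).choose (t - #S) = lam * (#X - #S).choose (t - #S) := by
  -- double count the pairs `(b, T)` with `b ∈ B`, `#T = t` and `S ⊆ T ⊆ b`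
  rw [mul_comm lam, ← card_filter_powersetCard_subset S X t hS hSt]
  refine card_mul_eq_card_mul (fun b T => T ⊆ b) (fun b hb => ?_) (fun T hT => ?_)
  · rw [mem_filter] at hb
    have hbX := hB.subset_of_mem hb.1
    rw [← hB.card_of_mem hb.1, ← card_filter_powersetCard_subset S b t hb.2 hSt]
    congr 1
    ext T
    simp only [bipartiteAbove, mem_filter, mem_powersetCard]
    exact ⟨fun h => ⟨⟨h.2, h.1.1.2⟩, h.1.2⟩, fun h => ⟨⟨⟨h.1.1.trans hbX, h.1.2⟩, h.2⟩, h.1.1⟩⟩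
  · simp only [mem_filter, mem_powersetCard] at hT
    rw [← hB.2 T hT.1.1 hT.1.2, bipartiteBelow, filter_filter]
    congr 1
    exact filter_congr fun b _ => ⟨And.right, fun h => ⟨hT.2.trans h, h⟩⟩

lemma of_le (hB : IsDesign X B k t lam) {s : ℕ} (hst : s ≤ t) (htk : t ≤ k) :
    IsDesign X B k s (designIndex #X k t lam s) := by
  refine ⟨hB.1, fun S hS hSs => ?_⟩
  subst hSs
  rw [designIndex, ← hB.card_filter_superset_mul hS hst,
    Nat.mul_div_cancel _ (Nat.choose_pos (by omega))]

lemma image [DecidableEq β] {f : α → β} (hf : Set.InjOn f X) (hB : IsDesign X B k t lam) :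
    IsDesign (X.image f) (B.image (·.image f)) k t lam := by
  refine ⟨fun b' hb' => ?_, fun T hT hTt => ?_⟩
  · obtain ⟨b, hb, rfl⟩ := mem_image.1 hb'
    have hbX := hB.subset_of_mem hb
    exact mem_powersetCard.2
      ⟨image_subset_image hbX, by rw [card_image_of_injOn (hf.mono hbX), hB.card_of_mem hb]⟩
  · obtain ⟨S, hSX, rfl⟩ := subset_image_iff.1 hT
    rw [card_image_of_injOn (hf.mono hSX)] at hTt
    have hinj : Set.InjOn (·.image f) {b | b ⊆ X} := fun b₁ h₁ b₂ h₂ h =>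
      (image_eq_image_iff_of_injOn hf h₁ h₂).1 h
    rw [filter_image,
      card_image_of_injOn (hinj.mono fun b hb => hB.subset_of_mem (mem_filter.1 hb).1),
      ← hB.2 S hSX hTt]
    exact congrArg card (filter_congr fun b hb =>
      image_subset_image_iff_of_injOn hf hSX (hB.subset_of_mem hb))

end IsDesign

lemma simpleDesignExists_iff {t v k lam : ℕ} :
    SimpleDesignExists t v k lam ↔
      ∃ (X : Finset ℕ) (B : Finset (Finset ℕ)), #X = v ∧ IsDesign X B k t lam := by
  refine exists_congr fun X => exists_congr fun B =>
    and_congr_right fun _ => and_congr_left fun _ => ?_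
  exact ⟨fun h b hb => mem_powersetCard.2 (h b hb), fun h b hb => mem_powersetCard.1 (h hb)⟩

lemma SimpleDesignExists.exists_isDesign {t v k lam : ℕ} (h : SimpleDesignExists t v k lam)
    {Y : Finset ℕ} (hY : #Y = v) : ∃ B, IsDesign Y B k t lam := by
  obtain ⟨X, B, hX, hB⟩ := simpleDesignExists_iff.1 h
  obtain ⟨f, hf⟩ := (X : Set ℕ).toFinite.exists_bijOn_of_encard_eq (t := (Y : Set ℕ))
    (by simp [hX, hY])
  have hXY : X.image f = Y := coe_injective (by rw [coe_image, hf.image_eq])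
  exact ⟨_, hXY ▸ hB.image hf.injOn⟩

section Join

variable {X Y : Finset α}

lemma union_inter_eq_left_of_disjoint (hXY : Disjoint X Y) {a c : Finset α} (ha : a ⊆ X)
    (hc : c ⊆ Y) : (a ∪ c) ∩ X = a := by
  rw [union_inter_distrib_right, inter_eq_left.2 ha,
    disjoint_iff_inter_eq_empty.1 (hXY.symm.mono_left hc), union_empty]

lemma filter_sups_superset (hXY : Disjoint X Y) {A C : Finset (Finset α)}
    (hA : ∀ a ∈ A, a ⊆ X) (hC : ∀ c ∈ C, c ⊆ Y) {T : Finset α} (hT : T ⊆ X ∪ Y) :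
    {b ∈ A ⊻ C | T ⊆ b} = {a ∈ A | T ∩ X ⊆ a} ⊻ {c ∈ C | T ∩ Y ⊆ c} := by
  ext b
  simp only [mem_filter, mem_sups, sup_eq_union]
  constructor
  · rintro ⟨⟨a, ha, c, hc, rfl⟩, hTb⟩
    refine ⟨a, ⟨ha, ?_⟩, c, ⟨hc, ?_⟩, rfl⟩
    · rw [← union_inter_eq_left_of_disjoint hXY (hA a ha) (hC c hc)]
      exact inter_subset_inter_right hTb
    · rw [← union_inter_eq_left_of_disjoint hXY.symm (hC c hc) (hA a ha), union_comm]
      exact inter_subset_inter_right hTb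
  · rintro ⟨a, ⟨ha, hTa⟩, c, ⟨hc, hTc⟩, rfl⟩
    refine ⟨⟨a, ha, c, hc, rfl⟩, ?_⟩
    calc T = T ∩ X ∪ T ∩ Y := by rw [← inter_union_distrib_left, inter_eq_left.2 hT]
      _ ⊆ a ∪ c := union_subset_union hTa hTc

lemma card_sups_of_disjoint (hXY : Disjoint X Y) {A C : Finset (Finset α)}
    (hA : ∀ a ∈ A, a ⊆ X) (hC : ∀ c ∈ C, c ⊆ Y) : #(A ⊻ C) = #A * #C := by
  refine (card_sups_iff A C).2 fun p hp q hq hpq => ?_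
  simp only [Set.mem_prod, mem_coe, sup_eq_union] at hp hq hpq
  refine Prod.ext ?_ ?_
  · rw [← union_inter_eq_left_of_disjoint hXY (hA _ hp.1) (hC _ hp.2), hpq,
      union_inter_eq_left_of_disjoint hXY (hA _ hq.1) (hC _ hq.2)]
  · rw [← union_inter_eq_left_of_disjoint hXY.symm (hC _ hp.2) (hA _ hp.1), union_comm, hpq,
      union_comm, union_inter_eq_left_of_disjoint hXY.symm (hC _ hq.2) (hA _ hq.1)]

lemma mem_powersetCard_of_mem_sups (hXY : Disjoint X Y) {A C : Finset (Finset α)} {i j : ℕ}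
    (hA : A ⊆ X.powersetCard i) (hC : C ⊆ Y.powersetCard j) {b : Finset α} (hb : b ∈ A ⊻ C) :
    b ∈ (X ∪ Y).powersetCard (i + j) ∧ #(b ∩ X) = i := by
  obtain ⟨a, ha, c, hc, rfl⟩ := mem_sups.1 hb
  obtain ⟨haX, hai⟩ := mem_powersetCard.1 (hA ha)
  obtain ⟨hcY, hcj⟩ := mem_powersetCard.1 (hC hc)
  rw [sup_eq_union, mem_powersetCard, union_inter_eq_left_of_disjoint hXY haX hcY,
    card_union_of_disjoint (hXY.mono haX hcY), hai, hcj]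
  exact ⟨⟨union_subset_union haX hcY, rfl⟩, rfl⟩

theorem isDesign_biUnion_sups (hXY : Disjoint X Y) {k t lam : ℕ}
    {A C : Fin (k + 1) → Finset (Finset α)} {lamA lamC : Fin (k + 1) → ℕ → ℕ}
    (hA : ∀ i, ∀ s ≤ t, IsDesign X (A i) i s (lamA i s))
    (hC : ∀ i, ∀ s ≤ t, IsDesign Y (C i) (k - i) s (lamC i s))
    (hlam : ∀ j ≤ t, ∑ i, lamA i j * lamC i (t - j) = lam) :
    IsDesign (X ∪ Y) (univ.biUnion fun i => A i ⊻ C i) k t lam := by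
  have hblock (i : Fin (k + 1)) (b : Finset α) (hb : b ∈ A i ⊻ C i) :
      b ∈ (X ∪ Y).powersetCard k ∧ #(b ∩ X) = i := by
    simpa [Nat.add_sub_cancel' (Nat.lt_succ_iff.1 i.2)] using
      mem_powersetCard_of_mem_sups hXY (hA i 0 t.zero_le).1 (hC i 0 t.zero_le).1 hb
  refine ⟨fun b hb => ?_, fun T hT hTt => ?_⟩
  · obtain ⟨i, -, hb⟩ := mem_biUnion.1 hb
    exact (hblock i b hb).1
  have hdisj : ((univ : Finset (Fin (k + 1))) : Set (Fin (k + 1))).PairwiseDisjoint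
      fun i => {b ∈ A i ⊻ C i | T ⊆ b} := fun i _ j _ hij =>
    disjoint_filter_filter <| disjoint_left.2 fun b hbi hbj =>
      hij (Fin.ext ((hblock i b hbi).2.symm.trans (hblock j b hbj).2))
  have hTsplit : #(T ∩ X) + #(T ∩ Y) = t := by
    rw [← card_union_of_disjoint (hXY.mono inter_subset_right inter_subset_right),
      ← inter_union_distrib_left, inter_eq_left.2 hT, hTt]
  have hAX i : ∀ a ∈ A i, a ⊆ X := fun a ha => (hA i 0 t.zero_le).subset_of_mem ha
  have hCY i : ∀ c ∈ C i, c ⊆ Y := fun c hc => (hC i 0 t.zero_le).subset_of_mem hc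
  rw [filter_biUnion, card_biUnion hdisj, ← hlam #(T ∩ X) (by omega)]
  refine sum_congr rfl fun i _ => ?_
  rw [filter_sups_superset hXY (hAX i) (hCY i) hT,
    card_sups_of_disjoint hXY (fun a ha => hAX i a (mem_filter.1 ha).1)
      (fun c hc => hCY i c (mem_filter.1 hc).1),
    (hA i _ (by omega)).2 _ inter_subset_right rfl,
    (hC i (t - #(T ∩ X)) (by omega)).2 _ inter_subset_right (by omega)]

end Join

lemma exists_isDesign_4_35_9 {X Y : Finset ℕ} (hXY : Disjoint X Y) (hX : #X = 17)
    (hY : #Y = 18)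
    {D₆ D₇ D₈ D₉ E₅ E₇ E₈ E₉ : Finset (Finset ℕ)}
    (hD₆ : IsDesign X D₆ 6 4 18) (hD₇ : IsDesign X D₇ 7 4 38) (hD₈ : IsDesign X D₈ 8 4 15)
    (hD₉ : IsDesign X D₉ 9 4 27) (hE₅ : IsDesign Y E₅ 5 4 4) (hE₇ : IsDesign Y E₇ 7 4 84)
    (hE₈ : IsDesign Y E₈ 8 4 133) (hE₉ : IsDesign Y E₉ 9 4 42) :
    ∃ B, IsDesign (X ∪ Y) B 9 4 23247 := by
  refine ⟨_, isDesign_biUnion_sups hXY (k := 9) (t := 4)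
    (A := ![X.powersetCard 0, X.powersetCard 1, X.powersetCard 2, ∅, X.powersetCard 4, ∅,
      D₆, D₇, D₈, D₉])
    (C := ![E₉, E₈, E₇, ∅, E₅, ∅,
      Y.powersetCard 3, Y.powersetCard 2, Y.powersetCard 1, Y.powersetCard 0])
    (lamA := ![completeIndex #X 0, completeIndex #X 1, completeIndex #X 2, fun _ => 0,
      completeIndex #X 4, fun _ => 0, designIndex #X 6 4 18, designIndex #X 7 4 38,
      designIndex #X 8 4 15, designIndex #X 9 4 27])
    (lamC := ![designIndex #Y 9 4 42, designIndex #Y 8 4 133, designIndex #Y 7 4 84, fun _ => 0,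
      designIndex #Y 5 4 4, fun _ => 0, completeIndex #Y 3, completeIndex #Y 2,
      completeIndex #Y 1, completeIndex #Y 0]) ?_ ?_ ?_⟩
  · intro i s hs
    fin_cases i
    exacts [isDesign_powersetCard X (by omega) s, isDesign_powersetCard X (by omega) s,
      isDesign_powersetCard X (by omega) s, isDesign_empty X 3 s,
      isDesign_powersetCard X (by omega) s, isDesign_empty X 5 s, hD₆.of_le hs (by norm_num),
      hD₇.of_le hs (by norm_num), hD₈.of_le hs (by norm_num), hD₉.of_le hs (by norm_num)]
  · intro i s hs
    fin_cases i
    exacts [hE₉.of_le hs (by norm_num), hE₈.of_le hs (by norm_num), hE₇.of_le hs (by norm_num),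
      isDesign_empty Y 6 s, hE₅.of_le hs (by norm_num), isDesign_empty Y 4 s,
      isDesign_powersetCard Y (by omega) s, isDesign_powersetCard Y (by omega) s,
      isDesign_powersetCard Y (by omega) s, isDesign_powersetCard Y (by omega) s]
  · intro j hj
    rw [hX, hY]
    interval_cases j <;> decide

theorem designExists_4_35_9_369
    (h1 : SimpleDesignExists 4 17 6 18)
    (h2 : SimpleDesignExists 4 17 7 38)
    (h3 : SimpleDesignExists 4 17 8 15)
    (h4 : SimpleDesignExists 4 17 9 27)
    (h5 : SimpleDesignExists 4 18 5 4)
    (h6 : SimpleDesignExists 4 18 7 84)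
    (h7 : SimpleDesignExists 4 18 8 133)
    (h8 : SimpleDesignExists 4 18 9 42)
    : SimpleDesignExists 4 35 9 23247 := by
  have hX : #(range 17) = 17 := card_range 17
  have hY : #(Ico 17 35) = 18 := Nat.card_Ico 17 35
  have hXY : Disjoint (range 17) (Ico 17 35) := by
    rw [range_eq_Ico]; exact Ico_disjoint_Ico_consecutive 0 17 35
  obtain ⟨D₆, hD₆⟩ := h1.exists_isDesign hX
  obtain ⟨D₇, hD₇⟩ := h2.exists_isDesign hX
  obtain ⟨D₈, hD₈⟩ := h3.exists_isDesign hX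
  obtain ⟨D₉, hD₉⟩ := h4.exists_isDesign hX
  obtain ⟨E₅, hE₅⟩ := h5.exists_isDesign hY
  obtain ⟨E₇, hE₇⟩ := h6.exists_isDesign hY
  obtain ⟨E₈, hE₈⟩ := h7.exists_isDesign hY
  obtain ⟨E₉, hE₉⟩ := h8.exists_isDesign hY
  obtain ⟨B, hB⟩ := exists_isDesign_4_35_9 hXY hX hY hD₆ hD₇ hD₈ hD₉ hE₅ hE₇ hE₈ hE₉
  exact simpleDesignExists_iff.2 ⟨_, B, by rw [card_union_of_disjoint hXY, hX, hY], hB⟩
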